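/- arXiv:2605.22965 — 2 statements merged into one kernel-verified Lean document; each statement's English description precedes it below -/
import Mathlib

section
/- One-step certainty-equivalent inequality: suppose V* is bounded with V*(t) = 0 and V* = T V*, V is bounded with V(t) = 0 and ‖V − V*‖∞ ≤ ε, and let δ = sup over nonterminal x and u ∈ U(x) of | ∫ V(F(x,u,w)) dμ(w) − V(F(x,u, w̄)) |, where w̄ is a fixed nominal disturbance. Let π_CE be the certainty-equivalent policy, π_CE(x) ∈ argmin_{u ∈ U(x)} ( f(x,u) + V(F(x,u, w̄)) ) for x ≠ t, π_CE(t) = 0. Then for every nonterminal x, f(x, π_CE(x)) + ∫ V*(F(x, π_CE(x), w)) dμ(w) ≤ V*(x) + 2(ε + δ); at the terminal state equality holds with both sides zero. -/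
open MeasureTheory ProbabilityTheory Filter
open scoped ENNReal

open Classical in
/-- Bellman operator of the SSP: `(T V)(x) = inf_{u ∈ U(x)} ( f(x,u) + ∫ V(F(x,u,w)) dμ(w) )`
for nonterminal `x`, and `(T V)(t) = 0`. -/
noncomputable def bellman {X U W : Type*} [MeasurableSpace W] (μ : Measure W)
    (t : X) (Ua : X → Set U) (f : X → U → ℝ) (F : X → U → W → X)
    (V : X → ℝ) (x : X) : ℝ :=
  if x = t then 0 else ⨅ u : Ua x, (f x (u : U) + ∫ w, V (F x (u : U) w) ∂μ)

/-! With `Q*(u) = f(x,u) + ∫ V*(F(x,u,w)) dμ(w)` the true Q-factor and `Q̂(u) = f(x,u) + V(F(x,u,w̄))`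
the nominal one minimized by `π_CE`, the two differ by at most `ε + δ` on `U(x)` (`ε` from replacing
`V*` by `V` under the integral, `δ` from replacing the expectation by the nominal point). A minimizer
of a function within `η` of `Q*` is a `2η`-minimizer of `Q*`, and `V*(x) = inf Q*` by Bellman's
equation. -/

theorem abs_integral_sub_integral_le_of_abs_sub_le {W : Type*} [MeasurableSpace W]
    {μ : Measure W} [IsProbabilityMeasure μ] {g h : W → ℝ} {ε : ℝ}
    (hg : Integrable g μ) (hh : Integrable h μ) (hgh : ∀ w, |g w - h w| ≤ ε) :
    |∫ w, g w ∂μ - ∫ w, h w ∂μ| ≤ ε := by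
  rw [← integral_sub hg hh]
  simpa using norm_integral_le_of_norm_le_const (μ := μ) (f := fun w => g w - h w)
    (Eventually.of_forall hgh)

theorem IsMinOn.apply_le_iInf_add_two_mul {U : Type*} {S : Set U} {q p : U → ℝ} {a : U} {η : ℝ}
    (hmin : IsMinOn p S a) (ha : a ∈ S) (hclose : ∀ u ∈ S, |q u - p u| ≤ η) :
    q a ≤ (⨅ u : S, q u) + 2 * η := by
  have : Nonempty S := ⟨⟨a, ha⟩⟩
  have hlower : q a - 2 * η ≤ ⨅ u : S, q u := le_ciInf fun u => by
    have hu := abs_le.mp (hclose u u.2)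
    have ha' := abs_le.mp (hclose a ha)
    have := isMinOn_iff.mp hmin u u.2
    linarith
  linarith

theorem bellman_of_ne {X U W : Type*} [MeasurableSpace W] (μ : Measure W) (t : X)
    (Ua : X → Set U) (f : X → U → ℝ) (F : X → U → W → X) (V : X → ℝ) {x : X} (hx : x ≠ t) :
    bellman μ t Ua f F V x = ⨅ u : Ua x, (f x (u : U) + ∫ w, V (F x (u : U) w) ∂μ) :=
  if_neg hx

theorem one_step_certainty_equivalent_inequality_general
    {X U W : Type*} [MeasurableSpace W]
    (μ : Measure W) [IsProbabilityMeasure μ]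
    (t : X) (u0 : U) (Ua : X → Set U) (F : X → U → W → X) (f : X → U → ℝ)
    (hft : f t u0 = 0) (hFt : ∀ w, F t u0 w = t)
    -- V* : bounded measurable, V*(t)=0, Bellman fixed point, well-defined one-step integrals
    (Vstar : X → ℝ)
    (hVst : Vstar t = 0) (hVsfix : ∀ y, Vstar y = bellman μ t Ua f F Vstar y)
    (hVsint : ∀ y u, Integrable (fun w => Vstar (F y u w)) μ)
    -- V : bounded measurable surrogate with V(t)=0 and ‖V - V*‖∞ ≤ ε
    (V : X → ℝ)
    (hVint : ∀ y u, Integrable (fun w => V (F y u w)) μ)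
    (ε : ℝ) (happrox : ∀ y, |V y - Vstar y| ≤ ε)
    -- model-mismatch constant δ: uniform bound on the nominal-vs-expected one-step evaluation
    (wbar : W) (δ : ℝ)
    (hδ : ∀ y, y ≠ t → ∀ u ∈ Ua y, |(∫ w, V (F y u w) ∂μ) - V (F y u wbar)| ≤ δ)
    (πCE : X → U)
    -- certainty-equivalent policy: greedy for the nominal one-step lookahead, minimum attained
    (hπt : πCE t = u0)
    (hce : ∀ y, y ≠ t → πCE y ∈ Ua y ∧ ∀ u ∈ Ua y,
      f y (πCE y) + V (F y (πCE y) wbar) ≤ f y u + V (F y u wbar)) :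
    (∀ y, y ≠ t →
      f y (πCE y) + ∫ w, Vstar (F y (πCE y) w) ∂μ ≤ Vstar y + 2 * (ε + δ)) ∧
    f t (πCE t) + ∫ w, Vstar (F t (πCE t) w) ∂μ = 0 := by
  refine ⟨fun y hy => ?_, by simp [hπt, hft, hFt, hVst]⟩
  obtain ⟨hmem, hgreedy⟩ := hce y hy
  have hclose : ∀ u ∈ Ua y, |(f y u + ∫ w, Vstar (F y u w) ∂μ) - (f y u + V (F y u wbar))|
      ≤ ε + δ := fun u hu => by
    have hε := abs_integral_sub_integral_le_of_abs_sub_le (hVsint y u) (hVint y u)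
      fun w => by rw [abs_sub_comm]; exact happrox _
    rw [add_sub_add_left_eq_sub]
    exact (abs_sub_le _ _ _).trans (add_le_add hε (hδ y hy u hu))
  rw [hVsfix y, bellman_of_ne μ t Ua f F Vstar hy]
  exact (isMinOn_iff.mpr hgreedy).apply_le_iInf_add_two_mul hmem hclose

/-- One-step certainty-equivalent inequality: with `‖V - V*‖∞ ≤ ε` and model-mismatch
constant `δ`, the certainty-equivalent policy `π_CE` satisfies, at every nonterminal `x`,
`f(x, π_CE(x)) + ∫ V*(F(x, π_CE(x), w)) dμ(w) ≤ V*(x) + 2(ε + δ)`; at the terminal state both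
sides of the corresponding equality are zero. -/
theorem one_step_certainty_equivalent_inequality
    {X U W : Type*} [MeasurableSpace X] [MeasurableSpace W]
    (μ : Measure W) [IsProbabilityMeasure μ]
    (t : X) (u0 : U) (Ua : X → Set U) (F : X → U → W → X) (f : X → U → ℝ)
    (hUne : ∀ y, (Ua y).Nonempty) (hfnn : ∀ y u, 0 ≤ f y u)
    (hUt : Ua t = {u0}) (hft : f t u0 = 0) (hFt : ∀ w, F t u0 w = t)
    -- V* : bounded measurable, V*(t)=0, Bellman fixed point, well-defined one-step integrals
    (Vstar : X → ℝ) (hVsmeas : Measurable Vstar) (hVsbdd : ∃ C, ∀ y, |Vstar y| ≤ C)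
    (hVst : Vstar t = 0) (hVsfix : ∀ y, Vstar y = bellman μ t Ua f F Vstar y)
    (hVsint : ∀ y u, Integrable (fun w => Vstar (F y u w)) μ)
    -- V : bounded measurable surrogate with V(t)=0 and ‖V - V*‖∞ ≤ ε
    (V : X → ℝ) (hVmeas : Measurable V) (hVbdd : ∃ C, ∀ y, |V y| ≤ C) (hVt : V t = 0)
    (hVint : ∀ y u, Integrable (fun w => V (F y u w)) μ)
    (ε : ℝ) (hε : 0 ≤ ε) (happrox : ∀ y, |V y - Vstar y| ≤ ε)
    -- model-mismatch constant δ: uniform bound on the nominal-vs-expected one-step evaluation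
    (wbar : W) (δ : ℝ)
    (hδ : ∀ y, y ≠ t → ∀ u ∈ Ua y, |(∫ w, V (F y u w) ∂μ) - V (F y u wbar)| ≤ δ)
    -- the infimum defining (T V)(y) is attained at every nonterminal y
    (hTatt : ∀ y, y ≠ t → ∃ u ∈ Ua y, ∀ u' ∈ Ua y,
      f y u + ∫ w, V (F y u w) ∂μ ≤ f y u' + ∫ w, V (F y u' w) ∂μ)
    (πCE : X → U)
    -- certainty-equivalent policy: greedy for the nominal one-step lookahead, minimum attained
    (hπt : πCE t = u0)
    (hce : ∀ y, y ≠ t → πCE y ∈ Ua y ∧ ∀ u ∈ Ua y,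
      f y (πCE y) + V (F y (πCE y) wbar) ≤ f y u + V (F y u wbar)) :
    (∀ y, y ≠ t →
      f y (πCE y) + ∫ w, Vstar (F y (πCE y) w) ∂μ ≤ Vstar y + 2 * (ε + δ)) ∧
    f t (πCE t) + ∫ w, Vstar (F t (πCE t) w) ∂μ = 0 :=
  one_step_certainty_equivalent_inequality_general μ t u0 Ua F f hft hFt Vstar hVst hVsfix hVsint V
    hVint ε happrox wbar δ hδ πCE hπt hce
end

section
/- Certainty-equivalent rollout bound: suppose V* is bounded with V*(t) = 0 and V* = T V*, V is bounded with V(t) = 0 and ‖V − V*‖∞ ≤ ε, δ is the certainty-equivalent model-mismatch constant, π_CE is the certainty-equivalent policy built from V and the nominal disturbance w̄, and π_CE is proper from the initial state x. Then J^{π_CE}(x) − V*(x) ≤ 2(ε + δ) · E[τ], where τ is the hitting time of the terminal state under π_CE. -/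
open MeasureTheory ProbabilityTheory Filter
open scoped ENNReal

/-- Closed-loop trajectory driven by a disturbance sequence `ω : ℕ → W`:
`x₀ = x`, `x_{k+1} = F(x_k, π(x_k), ω_k)`. -/
def traj {X U W : Type*} (F : X → U → W → X) (π : X → U) (x : X) (ω : ℕ → W) : ℕ → X
  | 0 => x
  | k + 1 => F (traj F π x ω k) (π (traj F π x ω k)) (ω k)

/-- The trajectory as a family of random variables on an abstract sample space `Ω`,
given the disturbance random variables `ξ k : Ω → W`. -/
def trajOn {X U W Ω : Type*} (F : X → U → W → X) (π : X → U) (x : X)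
    (ξ : ℕ → Ω → W) (k : ℕ) (ω : Ω) : X :=
  traj F π x (fun i => ξ i ω) k

/-- Hitting time `τ = inf { k ≥ 0 : x_k = t }` of the terminal state (`∞` if never reached),
valued in `ℝ≥0∞`. -/
noncomputable def hitTime {X Ω : Type*} (t : X) (Y : ℕ → Ω → X) (ω : Ω) : ℝ≥0∞ :=
  ⨅ (k : ℕ) (_ : Y k ω = t), (k : ℝ≥0∞)

/-- Total expected cost `J = E[ Σ_{k=0}^{τ-1} f(x_k, π(x_k)) ]` (in `ℝ≥0∞`; the stage cost
is nonnegative). -/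
noncomputable def totalCost {X U Ω : Type*} [MeasurableSpace Ω] (P : Measure Ω)
    (t : X) (f : X → U → ℝ) (π : X → U) (Y : ℕ → Ω → X) : ℝ≥0∞ :=
  ∫⁻ ω, ∑' (k : ℕ), (if (k : ℝ≥0∞) < hitTime t Y ω
    then ENNReal.ofReal (f (Y k ω) (π (Y k ω))) else 0) ∂P

/-- Expected hitting time `E[τ]` (in `ℝ≥0∞`). -/
noncomputable def expHit {X Ω : Type*} [MeasurableSpace Ω] (P : Measure Ω)
    (t : X) (Y : ℕ → Ω → X) : ℝ≥0∞ :=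
  ∫⁻ ω, hitTime t Y ω ∂P


open scoped NNReal Topology

/-!
Along the closed loop, the certainty-equivalent choice is compared with the Bellman minimiser
through four approximation steps (expected `V*` to expected `V`, expected `V` to nominal `V`, and
back at the competing control), each costing `ε` or `δ`. This yields the drift inequality
`f(y, π y) + E V*(F(y, π y, w)) ≤ V*(y) + 2(ε + δ)` at nonterminal `y`. Since `x_k` is
independent of `w_k`, taking expectations along the trajectory and telescoping bounds the cost of
the first `n` stages by `V*(x) - E V*(x_n) + 2(ε + δ) Σ_{k<n} P(x_k ≠ t)`. Properness makes
`E V*(x_n)` vanish in the limit, and `Σ_k P(x_k ≠ t) = E τ`.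
-/

lemma HasSum.le_add_of_add_le_add {s b d : ℕ → ℝ} {S M : ℝ} (hs : HasSum s S)
    (hb : Tendsto b atTop (𝓝 0)) (hstep : ∀ n, s n + b (n + 1) ≤ b n + d n)
    (hd : ∀ n, ∑ k ∈ Finset.range n, d k ≤ M) :
    S ≤ b 0 + M := by
  have hpartial : ∀ n, ∑ k ∈ Finset.range n, s k ≤ b 0 + M - b n := by
    intro n
    suffices ∑ k ∈ Finset.range n, s k + b n ≤ b 0 + ∑ k ∈ Finset.range n, d k by
      linarith [hd n]
    induction n with
    | zero => simp
    | succ n ih =>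
      rw [Finset.sum_range_succ, Finset.sum_range_succ]
      linarith [hstep n]
  simpa using le_of_tendsto_of_tendsto' hs.tendsto_sum_nat (tendsto_const_nhds.sub hb) hpartial

section Integration

variable {Ω X W : Type*} [MeasurableSpace Ω] [MeasurableSpace X] [MeasurableSpace W]
  {P : Measure Ω} [IsFiniteMeasure P] {μ : Measure W} {Z : Ω → X} {ξ : Ω → W}

lemma abs_integral_sub_integral_le [IsProbabilityMeasure μ] {g h : W → ℝ} {ε : ℝ}
    (hg : Integrable g μ) (hh : Integrable h μ) (hgh : ∀ w, |g w - h w| ≤ ε) :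
    |∫ w, g w ∂μ - ∫ w, h w ∂μ| ≤ ε := by
  rw [← integral_sub hg hh]
  simpa using norm_integral_le_of_norm_le_const (μ := μ) (f := fun w => g w - h w)
    (ae_of_all _ hgh)

lemma ProbabilityTheory.IndepFun.map_prodMk_eq_prod (hZ : Measurable Z) (hξ : Measurable ξ)
    (hind : IndepFun Z ξ P) (hlaw : P.map ξ = μ) :
    P.map (fun ω => (Z ω, ξ ω)) = (P.map Z).prod μ :=
  hlaw ▸ (indepFun_iff_map_prod_eq_prod_map_map hZ.aemeasurable hξ.aemeasurable).mp hind

lemma ProbabilityTheory.IndepFun.integral_comp_eq_integral_integral (hZ : Measurable Z)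
    (hξ : Measurable ξ) (hind : IndepFun Z ξ P) (hlaw : P.map ξ = μ) {H : X × W → ℝ}
    (hH : Measurable H) (hint : Integrable (fun ω => H (Z ω, ξ ω)) P) :
    ∫ ω, H (Z ω, ξ ω) ∂P = ∫ ω, ∫ w, H (Z ω, w) ∂μ ∂P := by
  subst hlaw
  have hZξ : AEMeasurable (fun ω => (Z ω, ξ ω)) P := (hZ.prodMk hξ).aemeasurable
  have hjoint := hind.map_prodMk_eq_prod hZ hξ rfl
  have hint' := (integrable_map_measure hH.aestronglyMeasurable hZξ).2 hint
  rw [hjoint] at hint'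
  rw [← integral_map hZξ hH.aestronglyMeasurable, hjoint, integral_prod H hint',
    integral_map hZ.aemeasurable hH.stronglyMeasurable.integral_prod_right'.aestronglyMeasurable]

lemma ProbabilityTheory.IndepFun.integrable_integral_comp (hZ : Measurable Z)
    (hξ : Measurable ξ) (hind : IndepFun Z ξ P) (hlaw : P.map ξ = μ) {H : X × W → ℝ}
    (hH : Measurable H) (hint : Integrable (fun ω => H (Z ω, ξ ω)) P) :
    Integrable (fun ω => ∫ w, H (Z ω, w) ∂μ) P := by
  subst hlaw
  have hint' := (integrable_map_measure hH.aestronglyMeasurable (hZ.prodMk hξ).aemeasurable).2 hint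
  rw [hind.map_prodMk_eq_prod hZ hξ rfl] at hint'
  exact (integrable_map_measure
    hH.stronglyMeasurable.integral_prod_right'.aestronglyMeasurable hZ.aemeasurable).1
    hint'.integral_prod_left

lemma integral_add_integral_le_of_le [MeasurableSingletonClass X] (hZ : Measurable Z)
    {t : X} {g G V : X → ℝ} {c : ℝ} (hg : Integrable (fun ω => g (Z ω)) P)
    (hG : Integrable (fun ω => G (Z ω)) P) (hV : Integrable (fun ω => V (Z ω)) P)
    (h : ∀ y, g y + G y ≤ V y + ({t}ᶜ : Set X).indicator (fun _ => c) y) :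
    ∫ ω, g (Z ω) ∂P + ∫ ω, G (Z ω) ∂P ≤ ∫ ω, V (Z ω) ∂P + c * P.real {ω | Z ω ≠ t} := by
  have hs : MeasurableSet {ω | Z ω ≠ t} := (hZ (measurableSet_singleton t)).compl
  have hc : Integrable ({ω | Z ω ≠ t}.indicator fun _ => c) P :=
    (integrable_const c).indicator hs
  calc ∫ ω, g (Z ω) ∂P + ∫ ω, G (Z ω) ∂P = ∫ ω, (g (Z ω) + G (Z ω)) ∂P :=
        (integral_add hg hG).symm
    _ ≤ ∫ ω, (V (Z ω) + {ω | Z ω ≠ t}.indicator (fun _ => c) ω) ∂P :=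
        integral_mono (hg.add hG) (hV.add hc) fun ω => h (Z ω)
    _ = ∫ ω, V (Z ω) ∂P + c * P.real {ω | Z ω ≠ t} := by
        rw [integral_add hV hc, integral_indicator_const c hs, smul_eq_mul, mul_comm]

end Integration

lemma add_integral_le_bellman_add_of_isMinOn {X U W : Type*} [MeasurableSpace W]
    {μ : Measure W} [IsProbabilityMeasure μ] {t y : X} (hy : y ≠ t) {Ua : X → Set U}
    {f : X → U → ℝ} {F : X → U → W → X} {Vstar V : X → ℝ} {ε δ : ℝ} {wbar : W} {u : U}
    (hne : (Ua y).Nonempty) (hVsint : ∀ u, Integrable (fun w => Vstar (F y u w)) μ)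
    (hVint : ∀ u, Integrable (fun w => V (F y u w)) μ) (happrox : ∀ z, |V z - Vstar z| ≤ ε)
    (hδ : ∀ u ∈ Ua y, |(∫ w, V (F y u w) ∂μ) - V (F y u wbar)| ≤ δ)
    (hmin : IsMinOn (fun u => f y u + V (F y u wbar)) (Ua y) u) (hu : u ∈ Ua y) :
    f y u + ∫ w, Vstar (F y u w) ∂μ ≤ bellman μ t Ua f F Vstar y + 2 * (ε + δ) := by
  have hint_approx (u : U) : |(∫ w, Vstar (F y u w) ∂μ) - ∫ w, V (F y u w) ∂μ| ≤ ε :=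
    abs_integral_sub_integral_le (hVsint u) (hVint u) fun w => abs_sub_comm (V _) _ ▸ happrox _
  have := hne.to_subtype
  rw [bellman, if_neg hy, ← sub_le_iff_le_add]
  refine le_ciInf fun ⟨u', hu'⟩ => ?_
  have hcomp := isMinOn_iff.1 hmin u' hu'
  have h₁ := abs_le.1 (hint_approx u)
  have h₂ := abs_le.1 (hδ u hu)
  have h₃ := abs_le.1 (hδ u' hu')
  have h₄ := abs_le.1 (hint_approx u')
  simp only at hcomp ⊢
  linarith [h₁.2, h₂.1, h₃.2, h₄.1]

section Absorption

variable {X Ω : Type*} {t : X} {Y : ℕ → Ω → X} {ω : Ω}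

lemma natCast_lt_hitTime_iff (hY : Monotone fun k => Y k ω = t) {k : ℕ} :
    (k : ℝ≥0∞) < hitTime t Y ω ↔ Y k ω ≠ t := by
  refine ⟨fun hlt hk => (iInf₂_le (f := fun j (_ : Y j ω = t) => (j : ℝ≥0∞)) k hk).not_gt hlt,
    fun hk => ?_⟩
  refine (Nat.cast_lt.2 k.lt_succ_self).trans_le (le_iInf₂ fun j hj => Nat.cast_le.2 ?_)
  by_contra! hjk
  exact hk (hY (Nat.lt_succ_iff.1 hjk) hj)

lemma exists_eq_of_hitTime_lt_top (h : hitTime t Y ω < ⊤) : ∃ k, Y k ω = t := by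
  simp only [hitTime, iInf_lt_iff] at h
  obtain ⟨k, hk, -⟩ := h
  exact ⟨k, hk⟩

lemma sum_range_indicator_le_hitTime (hY : Monotone fun k => Y k ω = t) (n : ℕ) :
    ∑ k ∈ Finset.range n, {ω | Y k ω ≠ t}.indicator 1 ω ≤ hitTime t Y ω := by
  refine le_iInf₂ fun j hj => ?_
  calc ∑ k ∈ Finset.range n, {ω | Y k ω ≠ t}.indicator (1 : Ω → ℝ≥0∞) ω
      ≤ ∑ k ∈ Finset.range j, {ω | Y k ω ≠ t}.indicator (1 : Ω → ℝ≥0∞) ω :=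
        Finset.sum_le_sum_of_ne_zero fun k _ hk => Finset.mem_range.2 <| not_le.1 fun hjk =>
          hk (Set.indicator_of_notMem (not_not.2 (hY hjk hj)) _)
    _ ≤ ∑ k ∈ Finset.range j, 1 := Finset.sum_le_sum fun k _ => Set.indicator_le_self _ _ _
    _ = j := by simp

variable [MeasurableSpace Ω] {P : Measure Ω}

lemma tsum_measure_ne_le_expHit [MeasurableSpace X] [MeasurableSingletonClass X]
    (hYm : ∀ k, Measurable (Y k)) (hY : ∀ ω, Monotone fun k => Y k ω = t) :
    ∑' k, P {ω | Y k ω ≠ t} ≤ expHit P t Y := by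
  have hmeas (k : ℕ) : MeasurableSet {ω | Y k ω ≠ t} :=
    (hYm k (measurableSet_singleton t)).compl
  calc ∑' k, P {ω | Y k ω ≠ t} = ∑' k, ∫⁻ ω, {ω | Y k ω ≠ t}.indicator 1 ω ∂P := by
        simp_rw [lintegral_indicator_one (hmeas _)]
    _ = ∫⁻ ω, ∑' k, {ω | Y k ω ≠ t}.indicator 1 ω ∂P :=
        (lintegral_tsum fun k => (measurable_one.indicator (hmeas k)).aemeasurable).symm
    _ ≤ expHit P t Y :=
        lintegral_mono fun ω =>
          ENNReal.tsum_le_of_sum_range_le (sum_range_indicator_le_hitTime (hY ω))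

lemma tendsto_integral_comp_of_hitTime_lt_top [MeasurableSpace X] [IsFiniteMeasure P]
    {V : X → ℝ} (hV : Measurable V) {C : ℝ} (hC : ∀ y, |V y| ≤ C) (hVt : V t = 0)
    (hYm : ∀ k, Measurable (Y k)) (hY : ∀ ω, Monotone fun k => Y k ω = t)
    (hτ : ∀ᵐ ω ∂P, hitTime t Y ω < ⊤) :
    Tendsto (fun n => ∫ ω, V (Y n ω) ∂P) atTop (𝓝 0) := by
  have hlim : ∀ᵐ ω ∂P, Tendsto (fun n => V (Y n ω)) atTop (𝓝 0) := by
    filter_upwards [hτ] with ω hω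
    obtain ⟨k, hk⟩ := exists_eq_of_hitTime_lt_top hω
    refine tendsto_const_nhds.congr' ?_
    filter_upwards [eventually_ge_atTop k] with n hn
    rw [hY ω hn hk, hVt]
  simpa using tendsto_integral_of_dominated_convergence (fun _ => C)
    (fun n => (hV.comp (hYm n)).aestronglyMeasurable) (integrable_const C)
    (fun n => ae_of_all _ fun ω => hC _) hlim

variable {U : Type*} {f : X → U → ℝ} {π : X → U}

lemma totalCost_eq_tsum_lintegral (hY : ∀ ω, Monotone fun k => Y k ω = t) (hft : f t (π t) = 0)
    (hf : ∀ k, Measurable fun ω => f (Y k ω) (π (Y k ω))) :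
    totalCost P t f π Y = ∑' k, ∫⁻ ω, ENNReal.ofReal (f (Y k ω) (π (Y k ω))) ∂P := by
  rw [totalCost, ← lintegral_tsum fun k => (hf k).ennreal_ofReal.aemeasurable]
  refine lintegral_congr fun ω => tsum_congr fun k => ?_
  by_cases hk : Y k ω = t
  · simp [hk, hft]
  · simp [(natCast_lt_hitTime_iff (hY ω)).2 hk]

lemma integrable_of_totalCost_ne_top (hf₀ : ∀ y, 0 ≤ f y (π y))
    (hY : ∀ ω, Monotone fun k => Y k ω = t) (hft : f t (π t) = 0)
    (hf : ∀ k, Measurable fun ω => f (Y k ω) (π (Y k ω))) (hJ : totalCost P t f π Y ≠ ⊤)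
    (k : ℕ) : Integrable (fun ω => f (Y k ω) (π (Y k ω))) P := by
  refine ⟨(hf k).aestronglyMeasurable,
    (hasFiniteIntegral_iff_ofReal (ae_of_all _ fun ω => hf₀ _)).2 ?_⟩
  rw [totalCost_eq_tsum_lintegral hY hft hf] at hJ
  exact (ENNReal.le_tsum k).trans_lt hJ.lt_top

lemma hasSum_integral_of_totalCost_ne_top (hf₀ : ∀ y, 0 ≤ f y (π y))
    (hY : ∀ ω, Monotone fun k => Y k ω = t) (hft : f t (π t) = 0)
    (hf : ∀ k, Measurable fun ω => f (Y k ω) (π (Y k ω))) (hJ : totalCost P t f π Y ≠ ⊤) :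
    HasSum (fun k => ∫ ω, f (Y k ω) (π (Y k ω)) ∂P) (totalCost P t f π Y).toReal := by
  simp_rw [integral_eq_lintegral_of_nonneg_ae (ae_of_all _ fun ω => hf₀ _)
    (hf _).aestronglyMeasurable]
  rw [totalCost_eq_tsum_lintegral hY hft hf] at hJ ⊢
  rw [ENNReal.tsum_toReal_eq fun k => ne_top_of_le_ne_top hJ (ENNReal.le_tsum k)]
  exact ENNReal.hasSum_toReal hJ

end Absorption

section Trajectory

variable {X U W Ω : Type*} {F : X → U → W → X} {π : X → U} {x : X} {ξ : ℕ → Ω → W}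

lemma trajOn_succ (k : ℕ) (ω : Ω) :
    trajOn F π x ξ (k + 1) ω = F (trajOn F π x ξ k ω) (π (trajOn F π x ξ k ω)) (ξ k ω) :=
  rfl

lemma monotone_trajOn_eq {t : X} (hFt : ∀ w, F t (π t) w = t) (ω : Ω) :
    Monotone fun k => trajOn F π x ξ k ω = t :=
  monotone_nat_of_le_succ fun k hk => by rw [trajOn_succ, hk, hFt]

variable [MeasurableSpace X] [MeasurableSpace U] [mW : MeasurableSpace W]

lemma measurable_trajOn_past (hF : Measurable fun p : X × U × W => F p.1 p.2.1 p.2.2)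
    (hπ : Measurable π) (k : ℕ) :
    Measurable[⨆ i ∈ Set.Iio k, mW.comap (ξ i)] (trajOn F π x ξ k) := by
  induction k with
  | zero => exact measurable_const
  | succ k ih =>
    have hY := ih.mono (biSup_mono fun i hi => Set.Iio_subset_Iio k.le_succ hi) le_rfl
    have hξk : Measurable[⨆ i ∈ Set.Iio (k + 1), mW.comap (ξ i)] (ξ k) :=
      (comap_measurable (ξ k)).mono
        (le_iSup₂ (f := fun i (_ : i ∈ Set.Iio (k + 1)) => mW.comap (ξ i)) k k.lt_succ_self)
        le_rfl
    exact hF.comp (hY.prodMk ((hπ.comp hY).prodMk hξk))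

variable [MeasurableSpace Ω]

lemma measurable_trajOn (hF : Measurable fun p : X × U × W => F p.1 p.2.1 p.2.2)
    (hπ : Measurable π) (hξ : ∀ k, Measurable (ξ k)) (k : ℕ) :
    Measurable (trajOn F π x ξ k) :=
  (measurable_trajOn_past hF hπ k).mono (iSup₂_le fun i _ => (hξ i).comap_le) le_rfl

lemma indepFun_trajOn (hF : Measurable fun p : X × U × W => F p.1 p.2.1 p.2.2)
    (hπ : Measurable π) (hξ : ∀ k, Measurable (ξ k)) {P : Measure Ω} (hind : iIndepFun ξ P)
    (k : ℕ) : IndepFun (trajOn F π x ξ k) (ξ k) P := by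
  rw [IndepFun_iff_Indep]
  have h := indep_iSup_of_disjoint (fun i => (hξ i).comap_le) hind.iIndep
    (S := Set.Iio k) (T := {k}) (by simp)
  refine indep_of_indep_of_le_right
    (indep_of_indep_of_le_left h (measurable_trajOn_past hF hπ k).comap_le) ?_
  simp

lemma integral_trajOn_add_integral_succ_le [MeasurableSingletonClass X]
    (hF : Measurable fun p : X × U × W => F p.1 p.2.1 p.2.2) (hπ : Measurable π)
    (hξ : ∀ k, Measurable (ξ k)) {P : Measure Ω} [IsFiniteMeasure P] (hind : iIndepFun ξ P)
    {μ : Measure W} (hlaw : ∀ k, P.map (ξ k) = μ) {t : X} {g V : X → ℝ} {c : ℝ}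
    (hV : Measurable V)
    (hstate : ∀ y,
      g y + ∫ w, V (F y (π y) w) ∂μ ≤ V y + ({t}ᶜ : Set X).indicator (fun _ => c) y)
    (k : ℕ) (hg : Integrable (fun ω => g (trajOn F π x ξ k ω)) P)
    (hVk : Integrable (fun ω => V (trajOn F π x ξ k ω)) P)
    (hVk' : Integrable (fun ω => V (trajOn F π x ξ (k + 1) ω)) P) :
    ∫ ω, g (trajOn F π x ξ k ω) ∂P + ∫ ω, V (trajOn F π x ξ (k + 1) ω) ∂P
      ≤ ∫ ω, V (trajOn F π x ξ k ω) ∂P + c * P.real {ω | trajOn F π x ξ k ω ≠ t} := by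
  have hYk := measurable_trajOn (x := x) hF hπ hξ k
  have hind_k := indepFun_trajOn (x := x) hF hπ hξ hind k
  have hH : Measurable fun p : X × W => V (F p.1 (π p.1) p.2) :=
    hV.comp (hF.comp (measurable_fst.prodMk ((hπ.comp measurable_fst).prodMk measurable_snd)))
  have hmarkov : ∫ ω, V (trajOn F π x ξ (k + 1) ω) ∂P
      = ∫ ω, ∫ w, V (F (trajOn F π x ξ k ω) (π (trajOn F π x ξ k ω)) w) ∂μ ∂P :=
    hind_k.integral_comp_eq_integral_integral hYk (hξ k) (hlaw k) hH hVk'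
  rw [hmarkov]
  exact integral_add_integral_le_of_le hYk hg
    (hind_k.integrable_integral_comp hYk (hξ k) (hlaw k) hH hVk') hVk hstate

end Trajectory

lemma totalCost_le_of_integral_add_le {X U Ω : Type*} [MeasurableSpace X]
    [MeasurableSingletonClass X] [MeasurableSpace Ω] {P : Measure Ω} [IsProbabilityMeasure P]
    {t x : X} {Y : ℕ → Ω → X} {f : X → U → ℝ} {π : X → U} (hf₀ : ∀ y, 0 ≤ f y (π y))
    (hft : f t (π t) = 0) (hf : ∀ k, Measurable fun ω => f (Y k ω) (π (Y k ω)))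
    (hYm : ∀ k, Measurable (Y k)) (hY0 : ∀ ω, Y 0 ω = x)
    (hY : ∀ ω, Monotone fun k => Y k ω = t)
    (hτ : ∀ᵐ ω ∂P, hitTime t Y ω < ⊤) (hJ : totalCost P t f π Y ≠ ⊤)
    {V : X → ℝ} (hV : Measurable V) {C : ℝ} (hC : ∀ y, |V y| ≤ C) (hVt : V t = 0) {c : ℝ≥0}
    (hstep : ∀ n, ∫ ω, f (Y n ω) (π (Y n ω)) ∂P + ∫ ω, V (Y (n + 1) ω) ∂P
      ≤ ∫ ω, V (Y n ω) ∂P + c * P.real {ω | Y n ω ≠ t}) :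
    (totalCost P t f π Y : EReal)
      ≤ (V x : EReal) + ((c * expHit P t Y : ℝ≥0∞) : EReal) := by
  rcases eq_or_ne ((c : ℝ≥0∞) * expHit P t Y) ⊤ with htop | hfin
  · simp [htop]
  have hsurvival (n : ℕ) :
      ∑ k ∈ Finset.range n, (c : ℝ) * P.real {ω | Y k ω ≠ t} ≤ (c * expHit P t Y).toReal := by
    rcases eq_or_ne c 0 with rfl | hc
    · simp
    rw [← Finset.mul_sum, ENNReal.toReal_mul, ENNReal.coe_toReal]
    gcongr
    rw [Finset.sum_congr rfl fun k _ => measureReal_def P _,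
      ← ENNReal.toReal_sum fun k _ => measure_ne_top P _]
    exact ENNReal.toReal_mono (ENNReal.lt_top_of_mul_ne_top_right hfin (by simpa using hc)).ne
      ((ENNReal.sum_le_tsum _).trans (tsum_measure_ne_le_expHit hYm hY))
  have hbound := (hasSum_integral_of_totalCost_ne_top hf₀ hY hft hf hJ).le_add_of_add_le_add
    (tendsto_integral_comp_of_hitTime_lt_top hV hC hVt hYm hY hτ) hstep hsurvival
  simp only [hY0, integral_const, probReal_univ, one_smul] at hbound
  rw [← EReal.coe_ennreal_toReal hJ, ← EReal.coe_ennreal_toReal hfin, ← EReal.coe_add]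
  exact EReal.coe_le_coe_iff.2 hbound


theorem certainty_equivalent_rollout_bound_general
    {X U W Ω : Type*} [MeasurableSpace X] [MeasurableSingletonClass X]
    [MeasurableSpace U] [MeasurableSpace W] [MeasurableSpace Ω]
    (μ : Measure W) [IsProbabilityMeasure μ] (P : Measure Ω) [IsProbabilityMeasure P]
    (t : X) (u0 : U) (Ua : X → Set U) (F : X → U → W → X) (f : X → U → ℝ)
    -- SSP model: nonempty control sets, nonnegative measurable stage cost, measurable dynamics,
    -- absorbing cost-free terminal state
    (hUne : ∀ y, (Ua y).Nonempty) (hfnn : ∀ y u, 0 ≤ f y u)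
    (hFmeas : Measurable fun p : X × U × W => F p.1 p.2.1 p.2.2)
    (hfmeas : Measurable fun p : X × U => f p.1 p.2)
    (hft : f t u0 = 0) (hFt : ∀ w, F t u0 w = t)
    -- V* : bounded measurable, V*(t)=0, Bellman fixed point, well-defined one-step integrals
    (Vstar : X → ℝ) (hVsmeas : Measurable Vstar) (hVsbdd : ∃ C, ∀ y, |Vstar y| ≤ C)
    (hVst : Vstar t = 0) (hVsfix : ∀ y, Vstar y = bellman μ t Ua f F Vstar y)
    (hVsint : ∀ y u, Integrable (fun w => Vstar (F y u w)) μ)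
    -- V : bounded measurable surrogate with V(t)=0 and ‖V - V*‖∞ ≤ ε
    (V : X → ℝ)
    (hVint : ∀ y u, Integrable (fun w => V (F y u w)) μ)
    (ε : ℝ) (happrox : ∀ y, |V y - Vstar y| ≤ ε)
    -- model-mismatch constant δ: uniform bound on the nominal-vs-expected one-step evaluation
    (wbar : W) (δ : ℝ)
    (hδ : ∀ y, y ≠ t → ∀ u ∈ Ua y, |(∫ w, V (F y u w) ∂μ) - V (F y u wbar)| ≤ δ)
    (πCE : X → U) (hπmeas : Measurable πCE)
    -- certainty-equivalent policy: greedy for the nominal one-step lookahead, minimum attained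
    (hπt : πCE t = u0)
    (hce : ∀ y, y ≠ t → πCE y ∈ Ua y ∧ ∀ u ∈ Ua y,
      f y (πCE y) + V (F y (πCE y) wbar) ≤ f y u + V (F y u wbar))
    -- i.i.d. disturbance sequence with common law μ on an abstract probability space
    (ξ : ℕ → Ω → W) (hξmeas : ∀ k, Measurable (ξ k))
    (hξindep : iIndepFun ξ P)
    (hξlaw : ∀ k, P.map (ξ k) = μ)
    -- properness of the closed loop from x: τ < ∞ a.s. and J(x) < ∞
    (x : X)
    (hproper_tau : ∀ᵐ ω ∂P, hitTime t (trajOn F πCE x ξ) ω < ⊤)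
    (hproper_J : totalCost P t f πCE (trajOn F πCE x ξ) < ⊤) :
    (totalCost P t f πCE (trajOn F πCE x ξ) : EReal)
      ≤ (Vstar x : EReal) +
        ((ENNReal.ofReal (2 * (ε + δ)) * expHit P t (trajOn F πCE x ξ) : ℝ≥0∞) : EReal) := by
  obtain ⟨C, hC⟩ := hVsbdd
  have hft' : f t (πCE t) = 0 := hπt ▸ hft
  have hY := monotone_trajOn_eq (x := x) (ξ := ξ) (hπt ▸ hFt)
  have hYm := measurable_trajOn (x := x) hFmeas hπmeas hξmeas
  have hcostm (k : ℕ) :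
      Measurable fun ω => f (trajOn F πCE x ξ k ω) (πCE (trajOn F πCE x ξ k ω)) :=
    hfmeas.comp ((hYm k).prodMk (hπmeas.comp (hYm k)))
  have hcost := integrable_of_totalCost_ne_top (fun y => hfnn y _) hY hft' hcostm hproper_J.ne
  have hVsY (k : ℕ) : Integrable (fun ω => Vstar (trajOn F πCE x ξ k ω)) P :=
    .of_bound (hVsmeas.comp (hYm k)).aestronglyMeasurable C (ae_of_all _ fun ω => hC _)
  have hstate (y : X) : f y (πCE y) + ∫ w, Vstar (F y (πCE y) w) ∂μ
      ≤ Vstar y + ({t}ᶜ : Set X).indicator (fun _ => ((2 * (ε + δ)).toNNReal : ℝ)) y := by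
    rcases eq_or_ne y t with rfl | hy
    · simp [hπt, hft, hFt, hVst]
    obtain ⟨hu, hmin⟩ := hce y hy
    rw [Set.indicator_of_mem hy, hVsfix y]
    exact (add_integral_le_bellman_add_of_isMinOn hy (hUne y) (hVsint y) (hVint y) happrox
      (hδ y hy) hmin hu).trans (by gcongr; exact Real.le_coe_toNNReal _)
  -- `ENNReal.ofReal r` is by definition the coercion of `r.toNNReal`.
  exact totalCost_le_of_integral_add_le (fun y => hfnn y _) hft' hcostm hYm (fun _ => rfl) hY
    hproper_tau hproper_J.ne hVsmeas hC hVst fun n =>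
      integral_trajOn_add_integral_succ_le hFmeas hπmeas hξmeas hξindep hξlaw hVsmeas hstate n
        (hcost n) (hVsY n) (hVsY (n + 1))

/-- Certainty-equivalent rollout bound: with `‖V - V*‖∞ ≤ ε`, model-mismatch constant `δ`, and
the certainty-equivalent policy `π_CE` proper from `x`,
`J^{π_CE}(x) - V*(x) ≤ 2(ε + δ) · E[τ]`, stated in `EReal`. -/
theorem certainty_equivalent_rollout_bound
    {X U W Ω : Type*} [MeasurableSpace X] [MeasurableSingletonClass X]
    [MeasurableSpace U] [MeasurableSpace W] [MeasurableSpace Ω]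
    (μ : Measure W) [IsProbabilityMeasure μ] (P : Measure Ω) [IsProbabilityMeasure P]
    (t : X) (u0 : U) (Ua : X → Set U) (F : X → U → W → X) (f : X → U → ℝ)
    -- SSP model: nonempty control sets, nonnegative measurable stage cost, measurable dynamics,
    -- absorbing cost-free terminal state
    (hUne : ∀ y, (Ua y).Nonempty) (hfnn : ∀ y u, 0 ≤ f y u)
    (hFmeas : Measurable fun p : X × U × W => F p.1 p.2.1 p.2.2)
    (hfmeas : Measurable fun p : X × U => f p.1 p.2)
    (hUt : Ua t = {u0}) (hft : f t u0 = 0) (hFt : ∀ w, F t u0 w = t)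
    -- V* : bounded measurable, V*(t)=0, Bellman fixed point, well-defined one-step integrals
    (Vstar : X → ℝ) (hVsmeas : Measurable Vstar) (hVsbdd : ∃ C, ∀ y, |Vstar y| ≤ C)
    (hVst : Vstar t = 0) (hVsfix : ∀ y, Vstar y = bellman μ t Ua f F Vstar y)
    (hVsint : ∀ y u, Integrable (fun w => Vstar (F y u w)) μ)
    -- V : bounded measurable surrogate with V(t)=0 and ‖V - V*‖∞ ≤ ε
    (V : X → ℝ) (hVmeas : Measurable V) (hVbdd : ∃ C, ∀ y, |V y| ≤ C) (hVt : V t = 0)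
    (hVint : ∀ y u, Integrable (fun w => V (F y u w)) μ)
    (ε : ℝ) (hε : 0 ≤ ε) (happrox : ∀ y, |V y - Vstar y| ≤ ε)
    -- model-mismatch constant δ: uniform bound on the nominal-vs-expected one-step evaluation
    (wbar : W) (δ : ℝ)
    (hδ : ∀ y, y ≠ t → ∀ u ∈ Ua y, |(∫ w, V (F y u w) ∂μ) - V (F y u wbar)| ≤ δ)
    -- the infimum defining (T V)(y) is attained at every nonterminal y
    (hTatt : ∀ y, y ≠ t → ∃ u ∈ Ua y, ∀ u' ∈ Ua y,
      f y u + ∫ w, V (F y u w) ∂μ ≤ f y u' + ∫ w, V (F y u' w) ∂μ)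
    (πCE : X → U) (hπmeas : Measurable πCE)
    -- certainty-equivalent policy: greedy for the nominal one-step lookahead, minimum attained
    (hπt : πCE t = u0)
    (hce : ∀ y, y ≠ t → πCE y ∈ Ua y ∧ ∀ u ∈ Ua y,
      f y (πCE y) + V (F y (πCE y) wbar) ≤ f y u + V (F y u wbar))
    -- i.i.d. disturbance sequence with common law μ on an abstract probability space
    (ξ : ℕ → Ω → W) (hξmeas : ∀ k, Measurable (ξ k))
    (hξindep : iIndepFun ξ P)
    (hξlaw : ∀ k, P.map (ξ k) = μ)
    -- properness of the closed loop from x: τ < ∞ a.s. and J(x) < ∞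
    (x : X)
    (hproper_tau : ∀ᵐ ω ∂P, hitTime t (trajOn F πCE x ξ) ω < ⊤)
    (hproper_J : totalCost P t f πCE (trajOn F πCE x ξ) < ⊤) :
    (totalCost P t f πCE (trajOn F πCE x ξ) : EReal)
      ≤ (Vstar x : EReal) +
        ((ENNReal.ofReal (2 * (ε + δ)) * expHit P t (trajOn F πCE x ξ) : ℝ≥0∞) : EReal) :=
  certainty_equivalent_rollout_bound_general μ P t u0 Ua F f hUne hfnn hFmeas hfmeas hft hFt Vstar
    hVsmeas hVsbdd hVst hVsfix hVsint V hVint ε happrox wbar δ hδ πCE hπmeas hπt hce ξ hξmeas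
    hξindep hξlaw x hproper_tau hproper_J
end
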